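/- Let A be a 2×2 integer matrix with determinant 1 and trace > 2, let 𝒳 ⊆ 𝕋² be a periodic orbit of f_A and let 𝒴 ⊆ 𝕋² be a finite f_A-invariant set disjoint from 𝒳. If there exists a positive 𝒳-rectangle disjoint from the lift 𝒴̃, then for every x ∈ 𝒳̃ there exists a positive 𝒳-string with origin x all of whose rectangles are disjoint from 𝒴̃. -/

import Mathlib

/- Common setup: following the paper, we identify each subset of the torus
`𝕋² = ℝ²/ℤ²` with its (`ℤ²`-saturated) lift to `ℝ²`. -/

open Matrix Set
open scoped Pointwise

namespace Paper

/-- Points of the plane ℝ². -/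
abbrev V : Type := Fin 2 → ℝ

/-- The integer lattice ℤ² ⊆ ℝ². -/
def lattice : Set V := Set.range fun m : Fin 2 → ℤ => fun i => (m i : ℝ)

/-- The linear action of an integer matrix on ℝ². -/
def actR (A : Matrix (Fin 2) (Fin 2) ℤ) (v : V) : V :=
  (A.map (Int.cast : ℤ → ℝ)).mulVec v

/-- `E ⊆ ℝ²` is the lift of a finite subset of the torus. -/
def IsTorusFinite (E : Set V) : Prop := ∃ F : Set V, F.Finite ∧ E = F + lattice

/-- `E` is the lift of an `f_A`-invariant subset of the torus. -/
def IsInvariant (A : Matrix (Fin 2) (Fin 2) ℤ) (E : Set V) : Prop := actR A '' E = E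

/-- `E` is the lift of a periodic orbit of `f_A`. -/
def IsPeriodicOrbit (A : Matrix (Fin 2) (Fin 2) ℤ) (E : Set V) : Prop :=
  ∃ x : V, ∃ p : ℕ, 0 < p ∧ (actR A)^[p] x - x ∈ lattice ∧
    E = {v | ∃ i : ℕ, v - (actR A)^[i] x ∈ lattice}

/-- A rectangle `R(p; s, u)`, recorded via its basepoint `p` and its side
lengths `s, u > 0` (in the directions of the fixed eigenvectors `v^s, v^u`). -/
structure Rect where
  p : V
  s : ℝ
  u : ℝ
  s_pos : 0 < s
  u_pos : 0 < u

namespace Rect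

/-- The set of points of the rectangle `R(p;s,u)`. -/
def carrier (vs vu : V) (R : Rect) : Set V :=
  {q | ∃ a b : ℝ, 0 ≤ a ∧ a ≤ R.s ∧ 0 ≤ b ∧ b ≤ R.u ∧ q = R.p + a • vs + b • vu}

/-- Endpoint of the increasing diagonal (whose origin is `R.p`). -/
def incEnd (vs vu : V) (R : Rect) : V := R.p + R.s • vs + R.u • vu

/-- Origin of the decreasing diagonal. -/
def decOrigin (vs : V) (R : Rect) : V := R.p + R.s • vs

/-- Endpoint of the decreasing diagonal. -/
def decEnd (vu : V) (R : Rect) : V := R.p + R.u • vu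

/-- `R` is a positive `E`-rectangle. -/
def IsPos (vs vu : V) (E : Set V) (R : Rect) : Prop :=
  R.p ∈ E ∧ R.incEnd vs vu ∈ E

/-- `R` is a negative `E`-rectangle. -/
def IsNeg (vs vu : V) (E : Set V) (R : Rect) : Prop :=
  R.decOrigin vs ∈ E ∧ R.decEnd vu ∈ E

/-- `R` is a primitive positive `E`-rectangle. -/
def IsPrimPos (vs vu : V) (E : Set V) (R : Rect) : Prop :=
  R.IsPos vs vu E ∧ R.carrier vs vu ∩ E = {R.p, R.incEnd vs vu}

/-- `R` is a primitive negative `E`-rectangle. -/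
def IsPrimNeg (vs vu : V) (E : Set V) (R : Rect) : Prop :=
  R.IsNeg vs vu E ∧ R.carrier vs vu ∩ E = {R.decOrigin vs, R.decEnd vu}

/-- Bottom stable side of a rectangle. -/
def botSide (vs : V) (R : Rect) : Set V :=
  {q | ∃ a : ℝ, 0 ≤ a ∧ a ≤ R.s ∧ q = R.p + a • vs}

/-- Top stable side of a rectangle. -/
def topSide (vs vu : V) (R : Rect) : Set V :=
  {q | ∃ a : ℝ, 0 ≤ a ∧ a ≤ R.s ∧ q = R.p + a • vs + R.u • vu}

/-- Left unstable side of a rectangle. -/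
def leftSide (vu : V) (R : Rect) : Set V :=
  {q | ∃ b : ℝ, 0 ≤ b ∧ b ≤ R.u ∧ q = R.p + b • vu}

/-- Interior of a rectangle. -/
def interior (vs vu : V) (R : Rect) : Set V :=
  {q | ∃ a b : ℝ, 0 < a ∧ a < R.s ∧ 0 < b ∧ b < R.u ∧ q = R.p + a • vs + b • vu}

end Rect

/-- The (closed) quadrant `C₊₊(x)`. -/
def quadPP (vs vu x : V) : Set V :=
  {q | ∃ a b : ℝ, 0 ≤ a ∧ 0 ≤ b ∧ q = x + a • vs + b • vu}

/-- `D` is a right horizontal subrectangle of `R`. -/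
def IsRightHorizSub (vs : V) (D R : Rect) : Prop :=
  D.s ≤ R.s ∧ D.u = R.u ∧ D.p = R.p + (R.s - D.s) • vs

/-- A positive `X`-string with origin `x`: a sequence of positive `X`-rectangles,
the first one having `x` as origin of its increasing diagonal, consecutive ones
meeting exactly at one point which is the endpoint of the increasing diagonal of
the former and the origin of the increasing diagonal of the latter. -/
def IsPosString (vs vu : V) (X : Set V) (x : V) (R : ℕ → Rect) : Prop :=
  (∀ i, (R i).IsPos vs vu X) ∧ (R 0).p = x ∧
    ∀ i, (R i).carrier vs vu ∩ (R (i + 1)).carrier vs vu = {(R i).incEnd vs vu} ∧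
      (R (i + 1)).p = (R i).incEnd vs vu

/-- A positive `X`-staircase with origin `x`. -/
def IsPosStaircase (vs vu : V) (X : Set V) (x : V) (R : ℕ → Rect) : Prop :=
  (∀ i, (R i).carrier vs vu ⊆ quadPP vs vu x) ∧
    ∃ Del : ℕ → Rect, IsPosString vs vu X x Del ∧ R 0 = Del 0 ∧
      (∀ i, 1 ≤ i → IsRightHorizSub vs (Del i) (R i)) ∧
      (∀ i, (R i).topSide vs vu ⊆ (R (i + 1)).botSide vs) ∧
      ∃ C : ℝ, ∀ i, (Del (i + 1)).s / (Del i).s ≤ C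

/-- Stable side lengths of the primitive positive `(X, x)`-rectangles. -/
def baseLengths (vs vu : V) (X : Set V) (x : V) : Set ℝ :=
  {s | ∃ R : Rect, R.IsPrimPos vs vu X ∧ R.p = x ∧ R.s = s}

/-- The Euclidean norm of a point of ℝ². -/
noncomputable def euclNorm (v : V) : ℝ := Real.sqrt ((v 0) ^ 2 + (v 1) ^ 2)

/-- `Y` is the lift of an `ε`-dense subset of the torus, for the metric on the
torus induced by the Euclidean metric of ℝ². -/
def EDense (ε : ℝ) (Y : Set V) : Prop := ∀ v : V, ∃ y ∈ Y, euclNorm (v - y) ≤ ε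

/-- The lift of `{(0,1/2), (1/2,0), (1/2,1/2)}`, i.e. the set
`{(0,1/2), (1/2,0), (1/2,1/2)} + ℤ²`. -/
def halfPoints : Set V :=
  {v : V | ∃ w ∈ ({![0, 1/2], ![1/2, 0], ![1/2, 1/2]} : Set V), v - w ∈ lattice}

/-- The lift of the point `(1/2,1/2)` of the torus, i.e. `(1/2,1/2) + ℤ²`. -/
def halfCenter : Set V := {v : V | v - ![1/2, 1/2] ∈ lattice}

/-! A single good rectangle `R₀` can be moved to any point `x ∈ 𝒳̃`: since `𝒳` is one periodic
orbit, `x ≡ A^k R₀.p (mod ℤ²)` for some `k`, and `A^k` maps `R₀` onto the rectangle based at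
`A^k R₀.p` with sides `λ^{-k} s, λ^k u`. A translate of that image by `ℤ²` is a positive
`𝒳`-rectangle with origin `x`; it still avoids `𝒴̃`, because `𝒴̃` is `ℤ²`-periodic and,
`A` being injective, closed under preimages by `A^k`. Chaining such rectangles, each based at
the diagonal endpoint of the previous one, gives the string: two rectangles glued this way
meet only in that corner since `v^s, v^u` are linearly independent. -/

section Lattice

def latticeAddSubgroup : AddSubgroup V := (AddMonoidHom.compLeft (Int.castAddHom ℝ) (Fin 2)).range

theorem zero_mem_lattice : (0 : V) ∈ lattice := latticeAddSubgroup.zero_mem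

theorem add_mem_lattice {v w : V} (hv : v ∈ lattice) (hw : w ∈ lattice) : v + w ∈ lattice :=
  latticeAddSubgroup.add_mem hv hw

theorem neg_mem_lattice {v : V} (hv : v ∈ lattice) : -v ∈ lattice :=
  latticeAddSubgroup.neg_mem hv

theorem sub_mem_lattice {v w : V} (hv : v ∈ lattice) (hw : w ∈ lattice) : v - w ∈ lattice :=
  latticeAddSubgroup.sub_mem hv hw

end Lattice

section Action

variable (A : Matrix (Fin 2) (Fin 2) ℤ)

def actLin : Module.End ℝ V := Matrix.toLin' (A.map (Int.cast : ℤ → ℝ))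

theorem coe_actLin : ⇑(actLin A) = actR A := rfl

theorem iterate_actR (k : ℕ) : (actR A)^[k] = ⇑(actLin A ^ k) := by
  rw [Module.End.coe_pow, coe_actLin]

theorem actR_injective (hdet : A.det ≠ 0) : Function.Injective (actR A) :=
  Matrix.mulVec_injective_iff_isUnit.2 <| (Matrix.isUnit_iff_isUnit_det _).2 <| by
    rw [← Int.cast_det]
    exact isUnit_iff_ne_zero.2 (Int.cast_ne_zero.2 hdet)

theorem actR_mapsTo_lattice : MapsTo (actR A) lattice lattice := by
  rintro _ ⟨m, rfl⟩
  refine ⟨A.mulVec m, funext fun i => ?_⟩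
  simp [actR, Matrix.mulVec, dotProduct, Fin.sum_univ_two]

theorem iterate_actR_sub_mem_lattice {v w : V} (h : v - w ∈ lattice) (k : ℕ) :
    (actR A)^[k] v - (actR A)^[k] w ∈ lattice := by
  rw [iterate_actR, ← map_sub, ← iterate_actR]
  exact (actR_mapsTo_lattice A).iterate k h

theorem iterate_actR_eq_pow_smul {v : V} {c : ℝ} (h : actR A v = c • v) (k : ℕ) :
    (actR A)^[k] v = c ^ k • v := by
  induction k with
  | zero => simp
  | succ k ih =>
    rw [Function.iterate_succ_apply', ih, ← coe_actLin, map_smul, coe_actLin, h, smul_smul,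
      pow_succ]

theorem iterate_add_mul_sub_mem_lattice {x : V} {p : ℕ} (hp : (actR A)^[p] x - x ∈ lattice)
    (m n : ℕ) : (actR A)^[m + n * p] x - (actR A)^[m] x ∈ lattice := by
  induction n with
  | zero => simpa using zero_mem_lattice
  | succ n ih =>
    have hstep := iterate_actR_sub_mem_lattice A hp (m + n * p)
    rw [← Function.iterate_add_apply] at hstep
    rw [show m + (n + 1) * p = m + n * p + p by ring]
    simpa only [sub_add_sub_cancel] using add_mem_lattice hstep ih

end Action

section InvariantSets

variable {A : Matrix (Fin 2) (Fin 2) ℤ} {X Y : Set V}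

theorem IsPeriodicOrbit.add_mem (hX : IsPeriodicOrbit A X) {v t : V} (hv : v ∈ X)
    (ht : t ∈ lattice) : v + t ∈ X := by
  obtain ⟨x, p, -, -, rfl⟩ := hX
  obtain ⟨i, hi⟩ := hv
  exact ⟨i, by simpa only [add_sub_right_comm] using add_mem_lattice hi ht⟩

theorem IsPeriodicOrbit.iterate_mem (hX : IsPeriodicOrbit A X) {v : V} (hv : v ∈ X) (k : ℕ) :
    (actR A)^[k] v ∈ X := by
  obtain ⟨x, p, -, -, rfl⟩ := hX
  obtain ⟨i, hi⟩ := hv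
  exact ⟨k + i, by simpa only [Function.iterate_add_apply] using
    iterate_actR_sub_mem_lattice A hi k⟩

theorem IsPeriodicOrbit.exists_iterate_sub_mem_lattice (hX : IsPeriodicOrbit A X) {v w : V}
    (hv : v ∈ X) (hw : w ∈ X) : ∃ k, v - (actR A)^[k] w ∈ lattice := by
  obtain ⟨x, p, hp, hper, rfl⟩ := hX
  obtain ⟨i, hi⟩ := hv
  obtain ⟨j, hj⟩ := hw
  obtain ⟨q, rfl⟩ : ∃ q, p = q + 1 := ⟨p - 1, by omega⟩
  refine ⟨i + j * q, ?_⟩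
  have hwx := iterate_actR_sub_mem_lattice A hj (i + j * q)
  rw [← Function.iterate_add_apply, show i + j * q + j = i + j * (q + 1) by ring] at hwx
  convert sub_mem_lattice (sub_mem_lattice hi hwx)
    (iterate_add_mul_sub_mem_lattice A hper i j) using 1
  abel

theorem IsTorusFinite.add_mem (hY : IsTorusFinite Y) {y t : V} (hy : y ∈ Y)
    (ht : t ∈ lattice) : y + t ∈ Y := by
  obtain ⟨F, -, rfl⟩ := hY
  obtain ⟨f, hf, l, hl, rfl⟩ := hy
  exact add_assoc f l t ▸ Set.add_mem_add hf (add_mem_lattice hl ht)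

theorem IsInvariant.mem_of_iterate_mem (hY : IsInvariant A Y) (hA : Function.Injective (actR A))
    {v : V} {k : ℕ} (hv : (actR A)^[k] v ∈ Y) : v ∈ Y := by
  induction k generalizing v with
  | zero => exact hv
  | succ k ih =>
    have hAv : actR A v ∈ actR A '' Y := by
      rw [hY]
      exact ih (by rwa [← Function.iterate_succ_apply])
    obtain ⟨w, hw, hwv⟩ := hAv
    rwa [← hA hwv]

end InvariantSets

theorem linearIndependent_pair_of_hasEigenvector {K M : Type*} [Field K] [AddCommGroup M]
    [Module K M] {f : Module.End K M} {μ ν : K} {x y : M} (hμν : μ ≠ ν)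
    (hx : f.HasEigenvector μ x) (hy : f.HasEigenvector ν y) : LinearIndependent K ![x, y] :=
  f.eigenvectors_linearIndependent' ![μ, ν] (by simp [hμν]) ![x, y]
    (Fin.forall_fin_two.2 ⟨hx, hy⟩)

section Rectangles

variable {vs vu : V}

theorem Rect.carrier_inter_carrier_of_p_eq_incEnd (hind : LinearIndependent ℝ ![vs, vu])
    {R R' : Rect} (hp : R'.p = R.incEnd vs vu) :
    R.carrier vs vu ∩ R'.carrier vs vu = {R.incEnd vs vu} := by
  ext q
  constructor
  · rintro ⟨⟨a, b, -, has, -, hbu, rfl⟩, ⟨a', b', ha', -, hb', -, hq⟩⟩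
    rw [hp, Rect.incEnd] at hq
    obtain ⟨rfl, rfl⟩ := hind.eq_of_pair (s := a) (t := b) (s' := R.s + a') (t' := R.u + b')
      (by linear_combination (norm := module) hq)
    obtain rfl : a' = 0 := by linarith
    obtain rfl : b' = 0 := by linarith
    simp [Rect.incEnd]
  · rintro rfl
    exact ⟨⟨R.s, R.u, R.s_pos.le, le_rfl, R.u_pos.le, le_rfl, rfl⟩,
      ⟨0, 0, le_rfl, R'.s_pos.le, le_rfl, R'.u_pos.le, by simp [hp]⟩⟩

/-- The image of `R` under `q ↦ T q + t`, for `T` scaling `vs` by `μ` and `vu` by `ν`. -/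
def Rect.map (T : Module.End ℝ V) {μ ν : ℝ} (hμ : 0 < μ) (hν : 0 < ν) (t : V) (R : Rect) : Rect :=
  ⟨T R.p + t, μ * R.s, ν * R.u, mul_pos hμ R.s_pos, mul_pos hν R.u_pos⟩

variable {T : Module.End ℝ V} {μ ν : ℝ} (hμ : 0 < μ) (hν : 0 < ν) (t : V) (R : Rect)

theorem Rect.incEnd_map (hTs : T vs = μ • vs) (hTu : T vu = ν • vu) :
    (R.map T hμ hν t).incEnd vs vu = T (R.incEnd vs vu) + t := by
  simp only [Rect.map, Rect.incEnd, map_add, map_smul, hTs, hTu, smul_smul]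
  module

theorem Rect.carrier_map_subset (hTs : T vs = μ • vs) (hTu : T vu = ν • vu) :
    (R.map T hμ hν t).carrier vs vu ⊆ (fun q => T q + t) '' R.carrier vs vu := by
  rintro _ ⟨a, b, ha, has, hb, hbu, rfl⟩
  refine ⟨R.p + (a / μ) • vs + (b / ν) • vu, ⟨a / μ, b / ν, by positivity,
    (div_le_iff₀' hμ).2 has, by positivity, (div_le_iff₀' hν).2 hbu, rfl⟩, ?_⟩
  simp only [Rect.map, map_add, map_smul, hTs, hTu, smul_smul, div_mul_cancel₀ _ hμ.ne',
    div_mul_cancel₀ _ hν.ne']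
  abel

end Rectangles

theorem exists_isPosString_of_forall_exists {vs vu : V} (hind : LinearIndependent ℝ ![vs, vu])
    {X : Set V} {P : Rect → Prop} (h : ∀ x ∈ X, ∃ R : Rect, R.p = x ∧ R.IsPos vs vu X ∧ P R)
    {x : V} (hx : x ∈ X) : ∃ R : ℕ → Rect, IsPosString vs vu X x R ∧ ∀ i, P (R i) := by
  choose F hFp hFpos hFP using h
  let next : X → X := fun y => ⟨(F y y.2).incEnd vs vu, (hFpos y y.2).2⟩
  let R : ℕ → Rect := fun n => F _ (next^[n] ⟨x, hx⟩).2
  have hRp : ∀ i, (R (i + 1)).p = (R i).incEnd vs vu := fun i => by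
    simp only [R, hFp, Function.iterate_succ_apply', next]
  exact ⟨R, ⟨fun i => hFpos _ _, hFp _ _, fun i =>
    ⟨Rect.carrier_inter_carrier_of_p_eq_incEnd hind (hRp i), hRp i⟩⟩, fun i => hFP _ _⟩

theorem exists_isPos_disjoint_of_isPeriodicOrbit {A : Matrix (Fin 2) (Fin 2) ℤ} (hdet : A.det ≠ 0)
    {lam : ℝ} (hlam : 0 < lam) {vs vu : V} (hAs : actR A vs = lam⁻¹ • vs)
    (hAu : actR A vu = lam • vu) {X Y : Set V} (hX : IsPeriodicOrbit A X)
    (hYfin : IsTorusFinite Y) (hYinv : IsInvariant A Y) {R₀ : Rect} (hR₀ : R₀.IsPos vs vu X)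
    (hR₀Y : Disjoint (R₀.carrier vs vu) Y) {x : V} (hx : x ∈ X) :
    ∃ R : Rect, R.p = x ∧ R.IsPos vs vu X ∧ Disjoint (R.carrier vs vu) Y := by
  obtain ⟨k, hk⟩ := hX.exists_iterate_sub_mem_lattice hx hR₀.1
  set t := x - (actR A)^[k] R₀.p
  have hTs : (actLin A ^ k) vs = lam⁻¹ ^ k • vs := by
    rw [← iterate_actR, iterate_actR_eq_pow_smul A hAs]
  have hTu : (actLin A ^ k) vu = lam ^ k • vu := by
    rw [← iterate_actR, iterate_actR_eq_pow_smul A hAu]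
  let R := R₀.map (actLin A ^ k) (pow_pos (inv_pos.2 hlam) k) (pow_pos hlam k) t
  have hRp : R.p = x := by simp only [Rect.map, iterate_actR, add_sub_cancel, inv_pow, R, t]
  refine ⟨R, hRp, ⟨hRp ▸ hx, ?_⟩, Set.disjoint_left.2 ?_⟩
  · rw [Rect.incEnd_map _ _ _ _ hTs hTu, ← iterate_actR]
    exact hX.add_mem (hX.iterate_mem hR₀.2 k) hk
  · rintro _ hq hqY
    obtain ⟨w, hw, rfl⟩ := Rect.carrier_map_subset _ _ _ _ hTs hTu hq
    have hwY : (actR A)^[k] w ∈ Y := by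
      simpa only [iterate_actR, add_neg_cancel_right] using hYfin.add_mem hqY (neg_mem_lattice hk)
    exact Set.disjoint_left.1 hR₀Y hw (hYinv.mem_of_iterate_mem (actR_injective A hdet) hwY)

theorem statement_6_general (A : Matrix (Fin 2) (Fin 2) ℤ) (hdet : A.det = 1)
    (lam : ℝ) (hlam : 1 < lam) (vs vu : V) (hvs : vs ≠ 0) (hvu : vu ≠ 0)
    (hAs : actR A vs = lam⁻¹ • vs) (hAu : actR A vu = lam • vu)
    (X Y : Set V) (hX : IsPeriodicOrbit A X)
    (hYfin : IsTorusFinite Y) (hYinv : IsInvariant A Y)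
    (h : ∃ R : Rect, R.IsPos vs vu X ∧ Disjoint (R.carrier vs vu) Y) :
    ∀ x ∈ X, ∃ R : ℕ → Rect, IsPosString vs vu X x R ∧
      ∀ i, Disjoint ((R i).carrier vs vu) Y := by
  have hlam₀ : 0 < lam := one_pos.trans hlam
  have hind : LinearIndependent ℝ ![vs, vu] :=
    linearIndependent_pair_of_hasEigenvector (f := actLin A)
      ((inv_lt_one_of_one_lt₀ hlam).trans hlam).ne
      (Module.End.hasEigenvector_iff.2 ⟨Module.End.mem_eigenspace_iff.2 hAs, hvs⟩)
      (Module.End.hasEigenvector_iff.2 ⟨Module.End.mem_eigenspace_iff.2 hAu, hvu⟩)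
  obtain ⟨R₀, hR₀, hR₀Y⟩ := h
  intro x hx
  exact exists_isPosString_of_forall_exists hind (fun y hy =>
    exists_isPos_disjoint_of_isPeriodicOrbit (hdet ▸ one_ne_zero) hlam₀ hAs hAu hX hYfin hYinv
      hR₀ hR₀Y hy) hx

/-- if there is a positive `𝒳`-rectangle disjoint from `𝒴̃`, then
every `x ∈ 𝒳̃` is the origin of a positive `𝒳`-string all of whose rectangles
are disjoint from `𝒴̃`. -/
theorem statement_6 (A : Matrix (Fin 2) (Fin 2) ℤ) (hdet : A.det = 1) (htr : 2 < A.trace)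
    (lam : ℝ) (hlam : 1 < lam) (vs vu : V) (hvs : vs ≠ 0) (hvu : vu ≠ 0)
    (hAs : actR A vs = lam⁻¹ • vs) (hAu : actR A vu = lam • vu)
    (X Y : Set V) (hX : IsPeriodicOrbit A X)
    (hYfin : IsTorusFinite Y) (hYinv : IsInvariant A Y) (hXY : Disjoint X Y)
    (h : ∃ R : Rect, R.IsPos vs vu X ∧ Disjoint (R.carrier vs vu) Y) :
    ∀ x ∈ X, ∃ R : ℕ → Rect, IsPosString vs vu X x R ∧
      ∀ i, Disjoint ((R i).carrier vs vu) Y :=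
  statement_6_general A hdet lam hlam vs vu hvs hvu hAs hAu X Y hX hYfin hYinv h

end Paper
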